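/- arXiv:1702.02047 — 3 statements merged into one kernel-verified Lean document; each statement's English description precedes it below -/
import Mathlib

section
/- PBTD and PBTD⁺ are monotonic: for concept classes 𝓛′ ⊆ 𝓛 over the same universe X, PBTD(𝓛′) ≤ PBTD(𝓛) and PBTD⁺(𝓛′) ≤ PBTD⁺(𝓛). -/
namespace PBT

variable {X : Type*}

/-- A set `L ⊆ X` is consistent with a set `T` of labeled examples
(label `true` = “+”, label `false` = “−”). -/
def Consistent (L : Set X) (T : Set (X × Bool)) : Prop :=
  ∀ p ∈ T, (p.2 = true → p.1 ∈ L) ∧ (p.2 = false → p.1 ∉ L)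

/-- `T` is a teaching set for `L` w.r.t. the concept class `𝓛`:
`L` is the only concept in `𝓛` that is consistent with `T`. -/
def IsTeachingSet (𝓛 : Set (Set X)) (L : Set X) (T : Set (X × Bool)) : Prop :=
  Consistent L T ∧ ∀ L' ∈ 𝓛, Consistent L' T → L' = L

/-- `TD L 𝓛`: least size of a finite teaching set for `L` w.r.t. `𝓛` (`⊤` if none exists). -/
noncomputable def TD (L : Set X) (𝓛 : Set (Set X)) : ℕ∞ :=
  sInf {n : ℕ∞ | ∃ T : Finset (X × Bool), IsTeachingSet 𝓛 L ↑T ∧ n = T.card}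

/-- A positive teaching set, identified with its set of (positively labeled) points. -/
def IsPosTeachingSet (𝓛 : Set (Set X)) (L : Set X) (S : Set X) : Prop :=
  S ⊆ L ∧ ∀ L' ∈ 𝓛, S ⊆ L' → L' = L

/-- least size of a finite positive teaching set for `L` w.r.t. `𝓛` (`⊤` if none exists). -/
noncomputable def TDpos (L : Set X) (𝓛 : Set (Set X)) : ℕ∞ :=
  sInf {n : ℕ∞ | ∃ S : Finset X, IsPosTeachingSet 𝓛 L ↑S ∧ n = S.card}

/-- A strict partial order (preference relation) on concepts:
`pr L' L` means `L` is strictly preferred over `L'`. -/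
def StrictPO (pr : Set X → Set X → Prop) : Prop :=
  (∀ A, ¬ pr A A) ∧ ∀ A B C : Set X, pr A B → pr B C → pr A C

/-- `PBTDord 𝓛 pr = sup_{L ∈ 𝓛} TD(L, 𝓛 \ {L' ∈ 𝓛 | pr L' L})`. -/
noncomputable def PBTDord (𝓛 : Set (Set X)) (pr : Set X → Set X → Prop) : ℕ∞ :=
  ⨆ L ∈ 𝓛, TD L {L' ∈ 𝓛 | ¬ pr L' L}

/-- preference-based teaching dimension of `𝓛`. -/
noncomputable def PBTD (𝓛 : Set (Set X)) : ℕ∞ :=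
  sInf {v : ℕ∞ | ∃ pr, StrictPO pr ∧ v = PBTDord 𝓛 pr}

/-- `PBTDposOrd 𝓛 pr = sup_{L ∈ 𝓛} TD⁺(L, 𝓛 \ {L' ∈ 𝓛 | pr L' L})`. -/
noncomputable def PBTDposOrd (𝓛 : Set (Set X)) (pr : Set X → Set X → Prop) : ℕ∞ :=
  ⨆ L ∈ 𝓛, TDpos L {L' ∈ 𝓛 | ¬ pr L' L}

/-- positive preference-based teaching dimension of `𝓛`. -/
noncomputable def PBTDpos (𝓛 : Set (Set X)) : ℕ∞ :=
  sInf {v : ℕ∞ | ∃ pr, StrictPO pr ∧ v = PBTDposOrd 𝓛 pr}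

theorem IsTeachingSet.mono {𝓐 𝓑 : Set (Set X)} {L : Set X} {T : Set (X × Bool)}
    (hT : IsTeachingSet 𝓑 L T) (h : 𝓐 ⊆ 𝓑) : IsTeachingSet 𝓐 L T :=
  ⟨hT.1, fun L' hL' => hT.2 L' (h hL')⟩

theorem IsPosTeachingSet.mono {𝓐 𝓑 : Set (Set X)} {L S : Set X}
    (hS : IsPosTeachingSet 𝓑 L S) (h : 𝓐 ⊆ 𝓑) : IsPosTeachingSet 𝓐 L S :=
  ⟨hS.1, fun L' hL' => hS.2 L' (h hL')⟩

theorem TD_mono (L : Set X) {𝓐 𝓑 : Set (Set X)} (h : 𝓐 ⊆ 𝓑) : TD L 𝓐 ≤ TD L 𝓑 :=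
  sInf_le_sInf fun _ ⟨T, hT, hn⟩ => ⟨T, hT.mono h, hn⟩

theorem TDpos_mono (L : Set X) {𝓐 𝓑 : Set (Set X)} (h : 𝓐 ⊆ 𝓑) :
    TDpos L 𝓐 ≤ TDpos L 𝓑 :=
  sInf_le_sInf fun _ ⟨S, hS, hn⟩ => ⟨S, hS.mono h, hn⟩

theorem PBTDord_mono {𝓛 𝓛' : Set (Set X)} (h : 𝓛' ⊆ 𝓛) (pr : Set X → Set X → Prop) :
    PBTDord 𝓛' pr ≤ PBTDord 𝓛 pr :=
  iSup₂_mono' fun L hL => ⟨L, h hL, TD_mono L fun _ hA => ⟨h hA.1, hA.2⟩⟩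

theorem PBTDposOrd_mono {𝓛 𝓛' : Set (Set X)} (h : 𝓛' ⊆ 𝓛) (pr : Set X → Set X → Prop) :
    PBTDposOrd 𝓛' pr ≤ PBTDposOrd 𝓛 pr :=
  iSup₂_mono' fun L hL => ⟨L, h hL, TDpos_mono L fun _ hA => ⟨h hA.1, hA.2⟩⟩

theorem PBTD_le_PBTDord (𝓛 : Set (Set X)) {pr : Set X → Set X → Prop} (hpr : StrictPO pr) :
    PBTD 𝓛 ≤ PBTDord 𝓛 pr :=
  sInf_le ⟨pr, hpr, rfl⟩

theorem PBTDpos_le_PBTDposOrd (𝓛 : Set (Set X)) {pr : Set X → Set X → Prop}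
    (hpr : StrictPO pr) : PBTDpos 𝓛 ≤ PBTDposOrd 𝓛 pr :=
  sInf_le ⟨pr, hpr, rfl⟩

theorem PBTD_mono {𝓛 𝓛' : Set (Set X)} (h : 𝓛' ⊆ 𝓛) : PBTD 𝓛' ≤ PBTD 𝓛 := by
  refine le_sInf ?_
  rintro _ ⟨pr, hpr, rfl⟩
  exact (PBTD_le_PBTDord 𝓛' hpr).trans (PBTDord_mono h pr)

theorem PBTDpos_mono {𝓛 𝓛' : Set (Set X)} (h : 𝓛' ⊆ 𝓛) : PBTDpos 𝓛' ≤ PBTDpos 𝓛 := by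
  refine le_sInf ?_
  rintro _ ⟨pr, hpr, rfl⟩
  exact (PBTDpos_le_PBTDposOrd 𝓛' hpr).trans (PBTDposOrd_mono h pr)

/-- Monotonicity of `PBTD` and `PBTD⁺`. -/
theorem pbtd_monotone {X : Type*} (𝓛 𝓛' : Set (Set X)) (h : 𝓛' ⊆ 𝓛) :
    PBTD 𝓛' ≤ PBTD 𝓛 ∧ PBTDpos 𝓛' ≤ PBTDpos 𝓛 :=
  ⟨PBTD_mono h, PBTDpos_mono h⟩

end PBT
end

section
/- Let d ≥ 1, let w* ∈ ℝ^d be a vector with w*_d ≠ 0, and let b* ∈ {−1, 1}. Then there exist three labeled examples, each consistent with the halfspace H_{w*,b*}, such that for every w ∈ ℝ^d and every b ∈ {−1, 0, 1}, if H_{w,b} is consistent with these three examples then b = b*, sign(w_d) = sign(w*_d), and moreover |w_d| ≥ |w*_d| if b* = −1 while |w_d| ≤ |w*_d| if b* = 1. -/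
/-!
All examples lie on a line `ℝ • u` with `a = ⟪w*, u⟫ ≠ 0` (for the theorem, `u` is the last
standard basis vector), so `H_{w',b'}` sees them only through `b'` and the ratio
`r = ⟪w', u⟫ / a`. For `b* = -1` the negative example `0` forces `b' < 0`, i.e. `b' = -1`, and
the positive example `a⁻¹ • u` forces `r ≥ 1`. For `b* = 1` the positive example `0` gives
`b' ≥ 0`, and the examples `-a⁻¹ • u` (positive) and `-2a⁻¹ • u` (negative) give
`r ≤ b' < 2r`; hence `r > 0`, `b' = 1` and `r ≤ 1`. Since `⟪w', u⟫ = r a`, the claims on sign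
and absolute value follow.
-/

namespace PBT

variable {X : Type*}

open scoped RealInnerProductSpace

section Consistent

variable {L : Set X} {p : X × Bool} {T : Set (X × Bool)}

@[simp]
lemma consistent_insert_iff :
    Consistent L (insert p T) ↔
      ((p.2 = true → p.1 ∈ L) ∧ (p.2 = false → p.1 ∉ L)) ∧ Consistent L T :=
  Set.forall_mem_insert

@[simp]
lemma consistent_singleton_iff :
    Consistent L {p} ↔ (p.2 = true → p.1 ∈ L) ∧ (p.2 = false → p.1 ∉ L) := by
  simp [Consistent]

end Consistent

lemma sign_eq_sign_of_div_pos {s a : ℝ} (h : 0 < s / a) : Real.sign s = Real.sign a := by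
  rcases div_pos_iff.1 h with ⟨hs, ha⟩ | ⟨hs, ha⟩
  · rw [Real.sign_of_pos hs, Real.sign_of_pos ha]
  · rw [Real.sign_of_neg hs, Real.sign_of_neg ha]

lemma abs_le_abs_of_one_le_div {s a : ℝ} (h : 1 ≤ s / a) : |a| ≤ |s| := by
  have ha : a ≠ 0 := by rintro rfl; norm_num at h
  have h' : 1 ≤ |s| / |a| := abs_div s a ▸ h.trans (le_abs_self _)
  rwa [one_le_div (abs_pos.2 ha)] at h'

lemma abs_le_abs_of_div_le_one {s a : ℝ} (hpos : 0 < s / a) (h : s / a ≤ 1) : |s| ≤ |a| := by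
  have ha : a ≠ 0 := by rintro rfl; norm_num at hpos
  have h' : |s| / |a| ≤ 1 := abs_div s a ▸ (abs_of_pos hpos).symm ▸ h
  rwa [div_le_one (abs_pos.2 ha)] at h'

section Halfspace

variable {E : Type*} [NormedAddCommGroup E] [InnerProductSpace ℝ E]

def halfspace (w : E) (b : ℝ) : Set E := {x | 0 ≤ ⟪w, x⟫ + b}

@[simp]
lemma smul_mem_halfspace_iff {w u : E} {b t : ℝ} :
    t • u ∈ halfspace w b ↔ 0 ≤ t * ⟪w, u⟫ + b := by
  simp [halfspace, real_inner_smul_right]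

@[simp]
lemma zero_mem_halfspace_iff {w : E} {b : ℝ} : (0 : E) ∈ halfspace w b ↔ 0 ≤ b := by
  simp [halfspace]

lemma consistent_halfspace_neg_bias_iff {w u : E} {a b : ℝ} :
    Consistent (halfspace w b) {(0, false), (a⁻¹ • u, true), (a⁻¹ • u, true)} ↔
      b < 0 ∧ 0 ≤ ⟪w, u⟫ / a + b := by
  simp [div_eq_inv_mul]

lemma consistent_halfspace_pos_bias_iff {w u : E} {a b : ℝ} :
    Consistent (halfspace w b) {(0, true), ((-a⁻¹) • u, true), ((-2 * a⁻¹) • u, false)} ↔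
      0 ≤ b ∧ ⟪w, u⟫ / a ≤ b ∧ b < 2 * (⟪w, u⟫ / a) := by
  simp [div_eq_inv_mul, mul_assoc, -neg_smul]

theorem exists_three_examples_determining_bias (w u : E) (hwu : ⟪w, u⟫ ≠ 0) (b : ℝ)
    (hb : b = -1 ∨ b = 1) :
    ∃ e₁ e₂ e₃ : E × Bool, Consistent (halfspace w b) {e₁, e₂, e₃} ∧
      ∀ (w' : E) (b' : ℝ), b' = -1 ∨ b' = 0 ∨ b' = 1 →
        Consistent (halfspace w' b') {e₁, e₂, e₃} →
        b' = b ∧ Real.sign ⟪w', u⟫ = Real.sign ⟪w, u⟫ ∧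
          (b = -1 → |⟪w, u⟫| ≤ |⟪w', u⟫|) ∧ (b = 1 → |⟪w', u⟫| ≤ |⟪w, u⟫|) := by
  set a := ⟪w, u⟫
  rcases hb with rfl | rfl
  · refine ⟨(0, false), (a⁻¹ • u, true), (a⁻¹ • u, true), ?_, fun w' b' hb' h => ?_⟩
    · rw [consistent_halfspace_neg_bias_iff, div_self hwu]
      norm_num
    obtain ⟨hneg, hmem⟩ := consistent_halfspace_neg_bias_iff.1 h
    obtain rfl : b' = -1 := by rcases hb' with rfl | rfl | rfl <;> first | rfl | linarith
    have hratio : 1 ≤ ⟪w', u⟫ / a := by linarith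
    exact ⟨rfl, sign_eq_sign_of_div_pos (by linarith), fun _ => abs_le_abs_of_one_le_div hratio,
      by norm_num⟩
  · refine ⟨(0, true), ((-a⁻¹) • u, true), ((-2 * a⁻¹) • u, false), ?_,
      fun w' b' hb' h => ?_⟩
    · rw [consistent_halfspace_pos_bias_iff, div_self hwu]
      norm_num
    obtain ⟨hnonneg, hle, hlt⟩ := consistent_halfspace_pos_bias_iff.1 h
    obtain rfl : b' = 1 := by rcases hb' with rfl | rfl | rfl <;> first | rfl | linarith
    have hpos : 0 < ⟪w', u⟫ / a := by linarith
    exact ⟨rfl, sign_eq_sign_of_div_pos hpos, by norm_num,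
      fun _ => abs_le_abs_of_div_le_one hpos hle⟩

end Halfspace

/-- Given `w*` with `w*_d ≠ 0` and a bias `b* ∈ {−1,1}`, there exist three labeled
examples consistent with `H_{w*,b*} = {x | ⟨w*,x⟩ + b* ≥ 0}` such that any pair
`(w, b)` with `b ∈ {−1,0,1}` whose halfspace `H_{w,b}` is consistent with them
satisfies `b = b*`, `sign(w_d) = sign(w*_d)`, and `|w_d| ≥ |w*_d|` if `b* = −1`
resp. `|w_d| ≤ |w*_d|` if `b* = 1`. -/
theorem three_examples (d : ℕ) (hd : 1 ≤ d) (w : EuclideanSpace ℝ (Fin d))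
    (hwd : w (Fin.mk (d - 1) (by omega)) ≠ 0) (b : ℝ) (hb : b = -1 ∨ b = 1) :
    ∃ e₁ e₂ e₃ : EuclideanSpace ℝ (Fin d) × Bool,
      Consistent {x : EuclideanSpace ℝ (Fin d) | (0:ℝ) ≤ inner ℝ w x + b}
        ({e₁, e₂, e₃} : Set (EuclideanSpace ℝ (Fin d) × Bool)) ∧
      ∀ (w' : EuclideanSpace ℝ (Fin d)) (b' : ℝ), b' = -1 ∨ b' = 0 ∨ b' = 1 →
        Consistent {x : EuclideanSpace ℝ (Fin d) | (0:ℝ) ≤ inner ℝ w' x + b'}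
          ({e₁, e₂, e₃} : Set (EuclideanSpace ℝ (Fin d) × Bool)) →
        b' = b ∧
        Real.sign (w' (Fin.mk (d - 1) (by omega))) =
          Real.sign (w (Fin.mk (d - 1) (by omega))) ∧
        (b = -1 → |w (Fin.mk (d - 1) (by omega))| ≤ |w' (Fin.mk (d - 1) (by omega))|) ∧
        (b = 1 → |w' (Fin.mk (d - 1) (by omega))| ≤ |w (Fin.mk (d - 1) (by omega))|) := by
  set k : Fin d := ⟨d - 1, by omega⟩
  have hinner (v : EuclideanSpace ℝ (Fin d)) : ⟪v, EuclideanSpace.single k 1⟫ = v k := by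
    simp [EuclideanSpace.inner_single_right]
  simpa only [hinner, halfspace] using
    exists_three_examples_determining_bias w (EuclideanSpace.single k 1) (by rwa [hinner]) b hb

end PBT
end

section
/- For every d ≥ 1, PBTD(𝓗_d) ≤ 6, where 𝓗_d = {H_{w,b} : w ∈ ℝ^d \ {0}, b ∈ ℝ} is the class of all halfspaces of ℝ^d. -/
namespace PBT

variable {X : Type*}

/-- The class `𝓗_d` of all (affine) halfspaces of `ℝ^d`. -/
def halfspaces (d : ℕ) : Set (Set (EuclideanSpace ℝ (Fin d))) :=
  {H | ∃ w : EuclideanSpace ℝ (Fin d), w ≠ 0 ∧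
        ∃ b : ℝ, H = {x | (0:ℝ) ≤ inner ℝ w x + b}}


/-!
Fix a dense sequence `(z n)` in `ℝ^d`. Rank a halfspace `H` first by the index `k` of the first
`z n` outside `H`, then by the distance from `z k` to `H`, and prefer higher ranks. Then `H` is
taught by `z k` as a negative and the point `p` of `H` nearest to `z k` as a positive example: a
consistent halfspace that is not less preferred misses `z k`, so has the same index `k` and is at
least as far from `z k` as `H` is, yet contains `p` at that distance. Hence `p` is its nearest point
to `z k` too, which pins it down as `H`. So even `PBTD(𝓗_d) ≤ 2`.
-/

open scoped InnerProductSpace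

section Preference

variable {X : Type*}

lemma strictPO_of_lt {α : Type*} [Preorder α] (f : Set X → α) : StrictPO fun A B => f A < f B :=
  ⟨fun A => lt_irrefl (f A), fun _ _ _ => lt_trans⟩

lemma pbtd_le_of_forall_teachingSet {𝓛 : Set (Set X)} {pr : Set X → Set X → Prop}
    (hpr : StrictPO pr) {n : ℕ}
    (h : ∀ L ∈ 𝓛, ∃ T : Finset (X × Bool),
      IsTeachingSet {L' ∈ 𝓛 | ¬ pr L' L} L T ∧ T.card ≤ n) :
    PBTD 𝓛 ≤ n := by
  refine (sInf_le ⟨pr, hpr, rfl⟩ : PBTD 𝓛 ≤ PBTDord 𝓛 pr).trans (iSup₂_le fun L hL => ?_)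
  obtain ⟨T, hT, hcard⟩ := h L hL
  exact (sInf_le ⟨T, hT, rfl⟩ : TD L _ ≤ T.card).trans (by exact_mod_cast hcard)

/-- `0` when every `z n` lies in `H`. -/
noncomputable def firstOutside (z : ℕ → X) (H : Set X) : ℕ :=
  sInf {n | z n ∉ H}

lemma firstOutside_le {z : ℕ → X} {H : Set X} {n : ℕ} (h : z n ∉ H) : firstOutside z H ≤ n :=
  Nat.sInf_le h

lemma apply_firstOutside_notMem {z : ℕ → X} {H : Set X} (h : ∃ n, z n ∉ H) :
    z (firstOutside z H) ∉ H :=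
  Nat.sInf_mem h

noncomputable def outsideRank [PseudoMetricSpace X] (z : ℕ → X) (H : Set X) : ℕ ×ₗ ℝ :=
  toLex (firstOutside z H, Metric.infDist (z (firstOutside z H)) H)

end Preference

section Halfspace

variable {E : Type*} [NormedAddCommGroup E] [InnerProductSpace ℝ E]

variable (E) in
def unitHalfspaces : Set (Set E) :=
  {H | ∃ u : E, ‖u‖ = 1 ∧ ∃ c : ℝ, H = {x | c ≤ ⟪u, x⟫_ℝ}}

lemma halfspaces_subset_unitHalfspaces (d : ℕ) :
    halfspaces d ⊆ unitHalfspaces (EuclideanSpace ℝ (Fin d)) := by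
  rintro _ ⟨w, hw, b, rfl⟩
  have hw' : 0 < ‖w‖ := norm_pos_iff.mpr hw
  refine ⟨‖w‖⁻¹ • w, by simp [norm_smul, hw'.ne'], -b / ‖w‖, ?_⟩
  ext x
  rw [Set.mem_ofPred_eq, Set.mem_ofPred_eq, real_inner_smul_left, ← div_eq_inv_mul,
    div_le_div_iff_of_pos_right hw']
  constructor <;> intro <;> linarith

lemma inner_add_smul_of_norm_eq_one {u : E} (hu : ‖u‖ = 1) (y : E) (t : ℝ) :
    ⟪u, y + t • u⟫_ℝ = ⟪u, y⟫_ℝ + t := by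
  rw [inner_add_right, real_inner_smul_right, real_inner_self_eq_norm_sq, hu]
  ring

lemma exists_apply_notMem_halfspace {z : ℕ → E} (hz : DenseRange z) {u : E} (hu : ‖u‖ = 1)
    (c : ℝ) : ∃ n, z n ∉ {x | c ≤ ⟪u, x⟫_ℝ} := by
  have hopen : IsOpen {x : E | ⟪u, x⟫_ℝ < c} := isOpen_lt (by fun_prop) continuous_const
  have hne : {x : E | ⟪u, x⟫_ℝ < c}.Nonempty :=
    ⟨(c - 1) • u, by simp [real_inner_smul_right, hu]⟩
  obtain ⟨n, hn⟩ := hz.exists_mem_open hopen hne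
  exact ⟨n, by simpa using hn⟩

lemma infDist_halfspace {u : E} (hu : ‖u‖ = 1) {c : ℝ} {y : E} (hy : ⟪u, y⟫_ℝ ≤ c) :
    Metric.infDist y {x | c ≤ ⟪u, x⟫_ℝ} = c - ⟪u, y⟫_ℝ := by
  have hmem : y + (c - ⟪u, y⟫_ℝ) • u ∈ {x | c ≤ ⟪u, x⟫_ℝ} := by
    simp [inner_add_smul_of_norm_eq_one hu]
  refine le_antisymm ?_ ((Metric.le_infDist ⟨_, hmem⟩).mpr fun x hx => ?_)
  · refine (Metric.infDist_le_dist_of_mem hmem).trans_eq ?_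
    rw [dist_self_add_right, norm_smul, hu, mul_one, Real.norm_of_nonneg (sub_nonneg.mpr hy)]
  · calc c - ⟪u, y⟫_ℝ ≤ ⟪u, x - y⟫_ℝ := by rw [inner_sub_right]; linarith [hx.out]
      _ ≤ ‖u‖ * ‖x - y‖ := real_inner_le_norm u _
      _ = dist y x := by rw [hu, one_mul, dist_comm, dist_eq_norm]

/-- `c - ⟪u, y⟫` is the distance from `y` to `{x | c ≤ ⟪u, x⟫}` and `y + (c - ⟪u, y⟫) • u` the
nearest point (`infDist_halfspace`). -/
lemma eq_of_gap_le_of_mem {u u' : E} {c c' : ℝ} {y : E} (hu : ‖u‖ = 1) (hu' : ‖u'‖ = 1)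
    (hy : ⟪u, y⟫_ℝ < c) (hgap : c - ⟪u, y⟫_ℝ ≤ c' - ⟪u', y⟫_ℝ)
    (hmem : c' ≤ ⟪u', y + (c - ⟪u, y⟫_ℝ) • u⟫_ℝ) : u' = u ∧ c' = c := by
  rw [inner_add_right, real_inner_smul_right] at hmem
  have hle : ⟪u', u⟫_ℝ ≤ 1 := by simpa [hu, hu'] using real_inner_le_norm u' u
  have hge : 1 ≤ ⟪u', u⟫_ℝ := by nlinarith
  have h1 : ⟪u', u⟫_ℝ = 1 := le_antisymm hle hge
  rw [h1, mul_one] at hmem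
  obtain rfl : u' = u := (inner_eq_one_iff_of_norm_eq_one hu' hu).mp h1
  exact ⟨rfl, by linarith⟩

lemma exists_teachingSet_card_le_two {z : ℕ → E} (hz : DenseRange z) {𝓛 : Set (Set E)}
    (h𝓛 : 𝓛 ⊆ unitHalfspaces E) {L : Set E} (hL : L ∈ unitHalfspaces E) :
    ∃ T : Finset (E × Bool),
      IsTeachingSet {L' ∈ 𝓛 | ¬ outsideRank z L' < outsideRank z L} L T ∧ T.card ≤ 2 := by
  classical
  obtain ⟨u, hu, c, rfl⟩ := hL
  set k := firstOutside z {x | c ≤ ⟪u, x⟫_ℝ}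
  have hk : ⟪u, z k⟫_ℝ < c := by
    simpa using apply_firstOutside_notMem (exists_apply_notMem_halfspace hz hu c)
  set p := z k + (c - ⟪u, z k⟫_ℝ) • u
  refine ⟨{(z k, false), (p, true)}, ⟨?_, ?_⟩, Finset.card_le_two⟩
  · have hp : c ≤ ⟪u, p⟫_ℝ := by simp [p, inner_add_smul_of_norm_eq_one hu]
    simp [Consistent, hk, hp]
  · rintro L' ⟨hL', hrank⟩ hcons
    obtain ⟨u', hu', c', rfl⟩ := h𝓛 hL'
    have hzk : z k ∉ {x | c' ≤ ⟪u', x⟫_ℝ} := (hcons (z k, false) (by simp)).2 rfl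
    have hp : c' ≤ ⟪u', p⟫_ℝ := (hcons (p, true) (by simp)).1 rfl
    have hgap : c - ⟪u, z k⟫_ℝ ≤ c' - ⟪u', z k⟫_ℝ := by
      rw [not_lt, outsideRank, outsideRank, Prod.Lex.toLex_le_toLex'] at hrank
      have hidx : firstOutside z {x | c' ≤ ⟪u', x⟫_ℝ} = k :=
        le_antisymm (firstOutside_le hzk) hrank.1
      have hdist := hrank.2 hidx.symm
      dsimp only at hdist
      rwa [hidx, infDist_halfspace hu hk.le, infDist_halfspace hu' (not_le.mp hzk).le] at hdist
    obtain ⟨rfl, rfl⟩ := eq_of_gap_le_of_mem hu hu' hk hgap hp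
    rfl

end Halfspace

theorem pbtd_halfspaces_le_six_general (d : ℕ) :
    PBTD (halfspaces d) ≤ 6 := by
  obtain ⟨z, hz⟩ := TopologicalSpace.exists_dense_seq (EuclideanSpace ℝ (Fin d))
  calc PBTD (halfspaces d) ≤ (2 : ℕ) :=
        pbtd_le_of_forall_teachingSet (strictPO_of_lt (outsideRank z)) fun L hL =>
          exists_teachingSet_card_le_two hz (halfspaces_subset_unitHalfspaces d)
            (halfspaces_subset_unitHalfspaces d hL)
    _ ≤ 6 := by norm_num

/-- `PBTD(𝓗_d) ≤ 6` for every `d ≥ 1`. -/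
theorem pbtd_halfspaces_le_six (d : ℕ) (hd : 1 ≤ d) :
    PBTD (halfspaces d) ≤ 6 :=
  pbtd_halfspaces_le_six_general d

end PBT
end
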